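/- Fix γ > 1 and c_h ∈ ℝ. Let (ρ, v, p, B, ψ) be continuously differentiable on an open set U ⊆ ℝ_t × ℝ³ with ρ > 0 and p > 0, and suppose the conserved variables u = (ρ, ρv, E, B, ψ) satisfy pointwise the ideal GLM-MHD system with Janhunen nonconservative term and no damping: ∂ₜu + ∇·f^a(u) + φ(∇·B) = 0. Then the entropy conservation law holds pointwise on U: ∂ₜS + ∇·(vS) = 0. -/

import Mathlib

open Matrix

/-- Partial derivative in coordinate direction `i` (coordinate `0` is time `t`,
coordinates `1,2,3` are space) of a scalar function on ℝ⁴ = ℝ_t × ℝ³. -/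
noncomputable def pd (i : Fin 4) (f : (Fin 4 → ℝ) → ℝ) (x : Fin 4 → ℝ) : ℝ :=
  fderiv ℝ f x (Pi.single i 1)

/-- The spatial coordinate index corresponding to the space direction `d`. -/
def sp (d : Fin 3) : Fin 4 := ⟨d.1 + 1, by omega⟩

/-- Spatial partial derivative in direction `d`. -/
noncomputable def spd (d : Fin 3) (f : (Fin 4 → ℝ) → ℝ) (x : Fin 4 → ℝ) : ℝ :=
  pd (sp d) f x

/-- The conserved variables `u = (ρ, ρv, E, B, ψ)` with total energy
`E = p/(γ−1) + ½ρ‖v‖² + ½‖B‖² + ½ψ²`. -/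
noncomputable def consVar (γ : ℝ) (ρ p ψ : (Fin 4 → ℝ) → ℝ)
    (v B : Fin 3 → (Fin 4 → ℝ) → ℝ) (x : Fin 4 → ℝ) : Fin 9 → ℝ :=
  ![ρ x,
    ρ x * v 0 x, ρ x * v 1 x, ρ x * v 2 x,
    p x / (γ - 1) + (1/2) * ρ x * (∑ k, (v k x) ^ 2)
      + (1/2) * (∑ k, (B k x) ^ 2) + (1/2) * (ψ x) ^ 2,
    B 0 x, B 1 x, B 2 x, ψ x]

/-- The advective GLM-MHD flux `f^a_d` in spatial direction `d` with GLM wave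
speed `c_h`. -/
noncomputable def fadvP (γ c_h : ℝ) (ρ p ψ : (Fin 4 → ℝ) → ℝ)
    (v B : Fin 3 → (Fin 4 → ℝ) → ℝ) (d : Fin 3) (x : Fin 4 → ℝ) : Fin 9 → ℝ :=
  ![ρ x * v d x,
    ρ x * v 0 x * v d x + (p x + (1/2) * ∑ k, (B k x) ^ 2)
      * (if (0 : Fin 3) = d then 1 else 0) - B 0 x * B d x,
    ρ x * v 1 x * v d x + (p x + (1/2) * ∑ k, (B k x) ^ 2)
      * (if (1 : Fin 3) = d then 1 else 0) - B 1 x * B d x,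
    ρ x * v 2 x * v d x + (p x + (1/2) * ∑ k, (B k x) ^ 2)
      * (if (2 : Fin 3) = d then 1 else 0) - B 2 x * B d x,
    v d x * ((1/2) * ρ x * (∑ k, (v k x) ^ 2) + γ * p x / (γ - 1) + ∑ k, (B k x) ^ 2)
      - B d x * (∑ k, v k x * B k x) + c_h * ψ x * B d x,
    v d x * B 0 x - B d x * v 0 x + c_h * ψ x * (if d = 0 then 1 else 0),
    v d x * B 1 x - B d x * v 1 x + c_h * ψ x * (if d = 1 then 1 else 0),
    v d x * B 2 x - B d x * v 2 x + c_h * ψ x * (if d = 2 then 1 else 0),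
    c_h * B d x]

/-- The entropy function `S = −ρs/(γ−1)` with `s = log (p ρ^(−γ))`. -/
noncomputable def entSP (γ : ℝ) (ρ p : (Fin 4 → ℝ) → ℝ) (x : Fin 4 → ℝ) : ℝ :=
  -(ρ x * Real.log (p x * (ρ x) ^ (-γ))) / (γ - 1)

/-! Along smooth solutions, with `D = ∂ₜ + v·∇`, the mass equation reads `Dρ + ρ ∇·v = 0`, and the
energy equation minus the kinetic (`v·`momentum `− ½‖v‖²·`mass), magnetic (`B·`induction) and GLM
(`ψ·`GLM) energy balances reads `(Dp + γp ∇·v)/(γ − 1) = 0`; the `∇·B` terms cancel there because of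
the Janhunen source in the induction equation. Hence the specific entropy `s = log p − γ log ρ` is
advected, `Ds = 0`, and `∂ₜS + ∇·(vS) = −s (Dρ + ρ ∇·v)/(γ − 1) = 0`. -/

open Filter Topology

section PartialDerivative

variable {f g : (Fin 4 → ℝ) → ℝ} {i : Fin 4} {x : Fin 4 → ℝ} {c : ℝ}

theorem pd_congr (h : f =ᶠ[𝓝 x] g) : pd i f x = pd i g x := by
  rw [pd, pd, h.fderiv_eq]

theorem pd_const : pd i (fun _ => c) x = 0 := by
  simp [pd]

theorem pd_add (hf : DifferentiableAt ℝ f x) (hg : DifferentiableAt ℝ g x) :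
    pd i (fun y => f y + g y) x = pd i f x + pd i g x := by
  simp [pd, fderiv_fun_add hf hg]

theorem pd_sub (hf : DifferentiableAt ℝ f x) (hg : DifferentiableAt ℝ g x) :
    pd i (fun y => f y - g y) x = pd i f x - pd i g x := by
  simp [pd, fderiv_fun_sub hf hg]

theorem pd_neg : pd i (fun y => -f y) x = -pd i f x := by
  simp [pd]

theorem pd_mul (hf : DifferentiableAt ℝ f x) (hg : DifferentiableAt ℝ g x) :
    pd i (fun y => f y * g y) x = pd i f x * g x + f x * pd i g x := by
  simp [pd, fderiv_fun_mul hf hg]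
  ring

theorem pd_const_mul (hf : DifferentiableAt ℝ f x) :
    pd i (fun y => c * f y) x = c * pd i f x := by
  rw [pd_mul (differentiableAt_const c) hf, pd_const, zero_mul, zero_add]

theorem pd_div_const (hf : DifferentiableAt ℝ f x) :
    pd i (fun y => f y / c) x = pd i f x / c := by
  simp_rw [div_eq_mul_inv, mul_comm _ c⁻¹]
  exact pd_const_mul hf

theorem pd_sq (hf : DifferentiableAt ℝ f x) :
    pd i (fun y => f y ^ 2) x = 2 * f x * pd i f x := by
  simp_rw [sq]
  rw [pd_mul hf hf]
  ring

theorem pd_log (hf : DifferentiableAt ℝ f x) (hx : f x ≠ 0) :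
    pd i (fun y => Real.log (f y)) x = pd i f x / f x := by
  simp [pd, (hf.hasFDerivAt.log hx).fderiv, div_eq_inv_mul]

end PartialDerivative

noncomputable def materialDeriv (v : Fin 3 → (Fin 4 → ℝ) → ℝ) (f : (Fin 4 → ℝ) → ℝ)
    (x : Fin 4 → ℝ) : ℝ :=
  pd 0 f x + ∑ d, v d x * spd d f x

noncomputable def spatialDiv (v : Fin 3 → (Fin 4 → ℝ) → ℝ) (x : Fin 4 → ℝ) : ℝ :=
  ∑ d, spd d (v d) x

section Transport

variable {v : Fin 3 → (Fin 4 → ℝ) → ℝ} {f ρ p : (Fin 4 → ℝ) → ℝ} {x : Fin 4 → ℝ} {γ : ℝ}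

theorem pd_time_add_spatialDiv_mul (hf : DifferentiableAt ℝ f x)
    (hv : ∀ d, DifferentiableAt ℝ (v d) x) :
    pd 0 f x + ∑ d, spd d (fun y => v d y * f y) x = materialDeriv v f x + f x * spatialDiv v x := by
  simp only [materialDeriv, spatialDiv, spd, pd_mul (hv _) hf, Fin.sum_univ_three]
  ring

theorem pd_log_mul_rpow_neg {i : Fin 4} (hρ : 0 < ρ x) (hp : 0 < p x)
    (dρ : DifferentiableAt ℝ ρ x) (dp : DifferentiableAt ℝ p x) :
    pd i (fun y => Real.log (p y * ρ y ^ (-γ))) x = pd i p x / p x - γ * (pd i ρ x / ρ x) := by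
  have hpos : ∀ᶠ y in 𝓝 x, 0 < ρ y ∧ 0 < p y :=
    (dρ.continuousAt.eventually (lt_mem_nhds hρ)).and (dp.continuousAt.eventually (lt_mem_nhds hp))
  have hlog : (fun y => Real.log (p y * ρ y ^ (-γ))) =ᶠ[𝓝 x]
      fun y => Real.log (p y) - γ * Real.log (ρ y) := by
    filter_upwards [hpos] with y ⟨hρy, hpy⟩
    rw [Real.log_mul hpy.ne' (Real.rpow_pos_of_pos hρy _).ne', Real.log_rpow hρy]
    ring
  rw [pd_congr hlog, pd_sub (dp.log hp.ne') ((dρ.log hρ.ne').const_mul γ),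
    pd_const_mul (dρ.log hρ.ne'), pd_log dp hp.ne', pd_log dρ hρ.ne']

theorem entropy_conservation_of_transport (hρ : 0 < ρ x) (hp : 0 < p x)
    (dρ : DifferentiableAt ℝ ρ x) (dp : DifferentiableAt ℝ p x)
    (dv : ∀ d, DifferentiableAt ℝ (v d) x)
    (hmass : materialDeriv v ρ x + ρ x * spatialDiv v x = 0)
    (hpress : materialDeriv v p x + γ * p x * spatialDiv v x = 0) :
    pd 0 (entSP γ ρ p) x + ∑ d, spd d (fun y => v d y * entSP γ ρ p y) x = 0 := by
  set s : (Fin 4 → ℝ) → ℝ := fun y => Real.log (p y * ρ y ^ (-γ))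
  have ds : DifferentiableAt ℝ s x :=
    (dp.mul (dρ.rpow_const (Or.inl hρ.ne'))).log (mul_pos hp (Real.rpow_pos_of_pos hρ _)).ne'
  have hS : entSP γ ρ p = fun y => -(ρ y * s y) / (γ - 1) := rfl
  have dS : DifferentiableAt ℝ (entSP γ ρ p) x := by
    rw [hS]
    fun_prop
  have hs_adv : materialDeriv v s x = 0 := by
    have hpd_s (i : Fin 4) : pd i s x = pd i p x / p x - γ * (pd i ρ x / ρ x) :=
      pd_log_mul_rpow_neg hρ hp dρ dp
    have h : materialDeriv v s x = materialDeriv v p x / p x - γ * (materialDeriv v ρ x / ρ x) := by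
      simp only [materialDeriv, spd, hpd_s, Fin.sum_univ_three]
      ring
    rw [h, eq_neg_of_add_eq_zero_left hmass, eq_neg_of_add_eq_zero_left hpress]
    field_simp
    ring
  have hpd_S (i : Fin 4) : pd i (entSP γ ρ p) x = -(pd i ρ x * s x + ρ x * pd i s x) / (γ - 1) := by
    rw [hS, pd_div_const (f := fun y => -(ρ y * s y)) (by fun_prop), pd_neg, pd_mul dρ ds]
  have hS_adv : materialDeriv v (entSP γ ρ p) x
      = -(materialDeriv v ρ x * s x + ρ x * materialDeriv v s x) / (γ - 1) := by
    simp only [materialDeriv, spd, hpd_S, Fin.sum_univ_three]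
    ring
  rw [pd_time_add_spatialDiv_mul dS dv, hS_adv, hs_adv, hS]
  linear_combination (-s x / (γ - 1)) * hmass

end Transport

def SolvesIdealGLMMHDAt (γ c_h : ℝ) (ρ p ψ : (Fin 4 → ℝ) → ℝ) (v B : Fin 3 → (Fin 4 → ℝ) → ℝ)
    (x : Fin 4 → ℝ) : Prop :=
  ∀ a : Fin 9,
    pd 0 (fun y => consVar γ ρ p ψ v B y a) x
      + (∑ d, spd d (fun y => fadvP γ c_h ρ p ψ v B d y a) x)
      + (![0, 0, 0, 0, 0, v 0 x, v 1 x, v 2 x, 0] : Fin 9 → ℝ) a * (∑ d, spd d (B d) x)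
    = 0

section GLMMHD

variable {γ c_h : ℝ} {ρ p ψ : (Fin 4 → ℝ) → ℝ} {v B : Fin 3 → (Fin 4 → ℝ) → ℝ}
  {x : Fin 4 → ℝ}

theorem SolvesIdealGLMMHDAt.mass (h : SolvesIdealGLMMHDAt γ c_h ρ p ψ v B x)
    (dρ : DifferentiableAt ℝ ρ x) (dv : ∀ d, DifferentiableAt ℝ (v d) x) :
    materialDeriv v ρ x + ρ x * spatialDiv v x = 0 := by
  have h0 := h 0
  simp only [consVar, fadvP, Matrix.cons_val, zero_mul, add_zero, spd, pd_mul dρ (dv _)] at h0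
  simp only [materialDeriv, spatialDiv, spd, Fin.sum_univ_three] at h0 ⊢
  linear_combination h0

theorem SolvesIdealGLMMHDAt.pressure (hγ : γ ≠ 1) (h : SolvesIdealGLMMHDAt γ c_h ρ p ψ v B x)
    (dρ : DifferentiableAt ℝ ρ x) (dp : DifferentiableAt ℝ p x) (dψ : DifferentiableAt ℝ ψ x)
    (dv : ∀ d, DifferentiableAt ℝ (v d) x) (dB : ∀ d, DifferentiableAt ℝ (B d) x) :
    materialDeriv v p x + γ * p x * spatialDiv v x = 0 := by
  have h0 := h 0; have h1 := h 1; have h2 := h 2; have h3 := h 3; have h4 := h 4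
  have h5 := h 5; have h6 := h 6; have h7 := h 7; have h8 := h 8
  simp only [consVar, fadvP, Matrix.cons_val, Fin.sum_univ_three, spd, Fin.isValue, ↓reduceIte,
    Fin.reduceEq, mul_one, mul_zero, add_zero, zero_mul] at h0 h1 h2 h3 h4 h5 h6 h7 h8
  simp (disch := fun_prop) only [pd_add, pd_sub, pd_mul, pd_const, pd_div_const, pd_sq]
    at h0 h1 h2 h3 h4 h5 h6 h7 h8
  have hγ1 : γ - 1 ≠ 0 := sub_ne_zero.mpr hγ
  simp only [materialDeriv, spatialDiv, spd, Fin.sum_univ_three]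
  linear_combination (norm := skip) (γ - 1) * (h4 - v 0 x * h1 - v 1 x * h2 - v 2 x * h3
    + (v 0 x ^ 2 + v 1 x ^ 2 + v 2 x ^ 2) / 2 * h0 - B 0 x * h5 - B 1 x * h6 - B 2 x * h7 - ψ x * h8)
  field_simp
  ring

end GLMMHD

/-- **Pointwise entropy conservation for the ideal GLM-MHD equations.**
If `∂ₜu + ∇·f^a + φ(∇·B) = 0` holds pointwise (with `φ` the Janhunen vector and no
damping) for a C¹ solution with `ρ, p > 0`, then the entropy conservation law
`∂ₜS + ∇·(vS) = 0` holds pointwise. -/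
theorem ideal_glm_mhd_entropy_conservation
    (γ c_h : ℝ) (hγ : 1 < γ)
    (U : Set (Fin 4 → ℝ)) (hU : IsOpen U)
    (ρ p ψ : (Fin 4 → ℝ) → ℝ) (v B : Fin 3 → (Fin 4 → ℝ) → ℝ)
    (hρreg : ContDiffOn ℝ 1 ρ U) (hpreg : ContDiffOn ℝ 1 p U)
    (hψreg : ContDiffOn ℝ 1 ψ U)
    (hvreg : ∀ k, ContDiffOn ℝ 1 (v k) U) (hBreg : ∀ k, ContDiffOn ℝ 1 (B k) U)
    (hpos : ∀ x ∈ U, 0 < ρ x ∧ 0 < p x)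
    (hPDE : ∀ x ∈ U, ∀ a : Fin 9,
      pd 0 (fun y => consVar γ ρ p ψ v B y a) x
        + (∑ d, spd d (fun y => fadvP γ c_h ρ p ψ v B d y a) x)
        + (![0, 0, 0, 0, 0, v 0 x, v 1 x, v 2 x, 0] : Fin 9 → ℝ) a
            * (∑ d, spd d (B d) x)
      = 0) :
    ∀ x ∈ U,
      pd 0 (entSP γ ρ p) x
        + (∑ d, spd d (fun y => v d y * entSP γ ρ p y) x) = 0 := by
  intro x hx
  have hdiff {f : (Fin 4 → ℝ) → ℝ} (hf : ContDiffOn ℝ 1 f U) : DifferentiableAt ℝ f x :=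
    (hf.contDiffAt (hU.mem_nhds hx)).differentiableAt one_ne_zero
  have hsol : SolvesIdealGLMMHDAt γ c_h ρ p ψ v B x := hPDE x hx
  have dv (k : Fin 3) := hdiff (hvreg k)
  exact entropy_conservation_of_transport (hpos x hx).1 (hpos x hx).2 (hdiff hρreg) (hdiff hpreg) dv
    (hsol.mass (hdiff hρreg) dv)
    (hsol.pressure hγ.ne' (hdiff hρreg) (hdiff hpreg) (hdiff hψreg) dv fun k => hdiff (hBreg k))
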